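/- Let H be a real Hilbert space, V a closed subspace with orthogonal projection P : H → V, u, v ∈ H, and α ∈ (0, 1). Write v₁ = Pv, v₂ = v − Pv, u₁ = Pu. If ‖v₂‖ < (α/√(1 − α²))‖v₁‖ and ⟨u₁, v₁⟩ < √((α²‖v‖² − ‖v₂‖²)/(‖v‖² − ‖v₂‖²)) · ‖u₁‖‖v₁‖, then ⟨u, v⟩ < α‖u‖‖v‖. -/

import Mathlib

open scoped RealInnerProductSpace

/-! The projection splits `⟪u, v⟫` as `⟪u₁, v₁⟫ + ⟪u₂, v₂⟫` with `u₂ = u - P u`. Bounding the second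
term by Cauchy–Schwarz and the first by hypothesis, `⟪u, v⟫ < ‖u₁‖ s + ‖u₂‖ ‖v₂‖` with
`s = √(α²‖v‖² - ‖v₂‖²)`, and Cauchy–Schwarz in `ℝ²` bounds this by
`√(‖u₁‖² + ‖u₂‖²) √(s² + ‖v₂‖²) = α ‖u‖ ‖v‖`. The bound on `‖v₂‖` amounts to
`‖v₂‖² < α²‖v‖²`, which makes `s` real. -/

lemma mul_add_mul_le_sqrt_mul_sqrt (a b c d : ℝ) :
    a * c + b * d ≤ √(a ^ 2 + b ^ 2) * √(c ^ 2 + d ^ 2) := by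
  rw [← Real.sqrt_mul (by positivity)]
  refine (le_abs_self _).trans (Real.abs_le_sqrt ?_)
  nlinarith [sq_nonneg (a * d - b * c)]

lemma sq_lt_sq_mul_add_sq_of_lt_div_sqrt {α c d : ℝ} (hα : α ^ 2 < 1) (hd : 0 ≤ d)
    (h : d < α / √(1 - α ^ 2) * c) : d ^ 2 < α ^ 2 * (c ^ 2 + d ^ 2) := by
  have ht : 0 < √(1 - α ^ 2) := Real.sqrt_pos.2 (sub_pos.2 hα)
  rw [div_mul_eq_mul_div, lt_div_iff₀ ht] at h
  have hsq := pow_lt_pow_left₀ h (by positivity) two_ne_zero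
  rw [mul_pow, Real.sq_sqrt (sub_pos.2 hα).le] at hsq
  linarith [mul_pow α c 2]

lemma sqrt_div_sq_mul_mul {c : ℝ} (x a : ℝ) (hc : 0 < c) : √(x / c ^ 2) * (a * c) = a * √x := by
  rw [Real.sqrt_div' _ (sq_nonneg c), Real.sqrt_sq hc.le]
  field_simp

namespace Submodule

variable {𝕜 E : Type*} [RCLike 𝕜] [NormedAddCommGroup E] [InnerProductSpace 𝕜 E]
  (K : Submodule 𝕜 E) [K.HasOrthogonalProjection]

open scoped InnerProductSpace

theorem inner_eq_inner_starProjection_add_inner_sub (u v : E) :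
    ⟪u, v⟫_𝕜 = ⟪K.starProjection u, K.starProjection v⟫_𝕜 +
      ⟪u - K.starProjection u, v - K.starProjection v⟫_𝕜 := by
  nth_rw 1 [← add_sub_cancel (K.starProjection u) u, ← add_sub_cancel (K.starProjection v) v]
  rw [inner_add_left, inner_add_right, inner_add_right,
    starProjection_inner_eq_zero _ _ (K.starProjection_apply_mem v),
    inner_eq_zero_symm.1 (starProjection_inner_eq_zero _ _ (K.starProjection_apply_mem u)),
    add_zero, zero_add]

theorem norm_sq_eq_norm_sq_starProjection_add_norm_sq_sub (v : E) :
    ‖v‖ ^ 2 = ‖K.starProjection v‖ ^ 2 + ‖v - K.starProjection v‖ ^ 2 := by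
  simpa using K.norm_sq_eq_add_norm_sq_starProjection v

end Submodule

theorem Submodule.real_inner_lt_of_inner_starProjection_lt {E : Type*} [NormedAddCommGroup E]
    [InnerProductSpace ℝ E] (K : Submodule ℝ E) [K.HasOrthogonalProjection] {u v : E} {α : ℝ}
    (hα : 0 ≤ α) (hv : ‖v - K.starProjection v‖ ^ 2 ≤ α ^ 2 * ‖v‖ ^ 2)
    (h : ⟪K.starProjection u, K.starProjection v⟫ <
      ‖K.starProjection u‖ * √(α ^ 2 * ‖v‖ ^ 2 - ‖v - K.starProjection v‖ ^ 2)) :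
    ⟪u, v⟫ < α * (‖u‖ * ‖v‖) := by
  set s := √(α ^ 2 * ‖v‖ ^ 2 - ‖v - K.starProjection v‖ ^ 2)
  calc ⟪u, v⟫
      = ⟪K.starProjection u, K.starProjection v⟫ +
          ⟪u - K.starProjection u, v - K.starProjection v⟫ :=
        K.inner_eq_inner_starProjection_add_inner_sub u v
    _ < ‖K.starProjection u‖ * s + ‖u - K.starProjection u‖ * ‖v - K.starProjection v‖ :=
        add_lt_add_of_lt_of_le h (real_inner_le_norm _ _)
    _ ≤ √(‖K.starProjection u‖ ^ 2 + ‖u - K.starProjection u‖ ^ 2) *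
          √(s ^ 2 + ‖v - K.starProjection v‖ ^ 2) :=
        mul_add_mul_le_sqrt_mul_sqrt _ _ _ _
    _ = ‖u‖ * (α * ‖v‖) := by
        rw [← K.norm_sq_eq_norm_sq_starProjection_add_norm_sq_sub u,
          Real.sq_sqrt (sub_nonneg.2 hv), sub_add_cancel, ← mul_pow,
          Real.sqrt_sq (norm_nonneg u), Real.sqrt_sq (by positivity)]
    _ = α * (‖u‖ * ‖v‖) := mul_left_comm _ _ _

theorem stmt14_general {H : Type*} [NormedAddCommGroup H] [InnerProductSpace ℝ H]
    (V : Submodule ℝ H) [CompleteSpace V]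
    (u v : H) (α : ℝ) (hα0 : 0 < α) (hα1 : α < 1)
    (h1 : ‖v - (Submodule.orthogonalProjection V v : H)‖ <
      α / Real.sqrt (1 - α ^ 2) * ‖(Submodule.orthogonalProjection V v : H)‖)
    (h2 : ⟪(Submodule.orthogonalProjection V u : H), (Submodule.orthogonalProjection V v : H)⟫ <
      Real.sqrt ((α ^ 2 * ‖v‖ ^ 2 - ‖v - (Submodule.orthogonalProjection V v : H)‖ ^ 2) /
          (‖v‖ ^ 2 - ‖v - (Submodule.orthogonalProjection V v : H)‖ ^ 2)) *
        (‖(Submodule.orthogonalProjection V u : H)‖ * ‖(Submodule.orthogonalProjection V v : H)‖)) :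
    ⟪u, v⟫ < α * (‖u‖ * ‖v‖) := by
  simp only [Submodule.coe_orthogonalProjectionOnto_apply] at h1 h2
  have hpyth := V.norm_sq_eq_norm_sq_starProjection_add_norm_sq_sub v
  have hPv : 0 < ‖V.starProjection v‖ :=
    pos_of_mul_pos_right ((norm_nonneg _).trans_lt h1) (by positivity)
  rw [hpyth, add_sub_cancel_right, sqrt_div_sq_mul_mul _ _ hPv, ← hpyth] at h2
  have hv := sq_lt_sq_mul_add_sq_of_lt_div_sqrt (by nlinarith) (norm_nonneg _) h1
  exact V.real_inner_lt_of_inner_starProjection_lt hα0.le (hpyth ▸ hv.le) h2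

/-- Write `v₁ = P v`, `v₂ = v - P v`, `u₁ = P u`.  If `α ∈ (0,1)`,
`‖v₂‖ < (α/√(1-α²)) ‖v₁‖` and
`⟨u₁, v₁⟩ < √((α²‖v‖² - ‖v₂‖²)/(‖v‖² - ‖v₂‖²)) ‖u₁‖ ‖v₁‖`, then
`⟨u, v⟩ < α ‖u‖ ‖v‖`. -/
theorem stmt14 {H : Type*} [NormedAddCommGroup H] [InnerProductSpace ℝ H] [CompleteSpace H]
    (V : Submodule ℝ H) [CompleteSpace V]
    (u v : H) (α : ℝ) (hα0 : 0 < α) (hα1 : α < 1)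
    (h1 : ‖v - (Submodule.orthogonalProjection V v : H)‖ <
      α / Real.sqrt (1 - α ^ 2) * ‖(Submodule.orthogonalProjection V v : H)‖)
    (h2 : ⟪(Submodule.orthogonalProjection V u : H), (Submodule.orthogonalProjection V v : H)⟫ <
      Real.sqrt ((α ^ 2 * ‖v‖ ^ 2 - ‖v - (Submodule.orthogonalProjection V v : H)‖ ^ 2) /
          (‖v‖ ^ 2 - ‖v - (Submodule.orthogonalProjection V v : H)‖ ^ 2)) *
        (‖(Submodule.orthogonalProjection V u : H)‖ * ‖(Submodule.orthogonalProjection V v : H)‖)) :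
    ⟪u, v⟫ < α * (‖u‖ * ‖v‖) :=
  stmt14_general V u v α hα0 hα1 h1 h2
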